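/- Let A ⊆ B(H₁) and B ⊆ B(H₂) be unital operator algebras, and suppose there exist uniform algebras F₁, F₂ and unital completely isometric algebra isomorphisms F₁ → A and F₂ → B. Then every unital completely bounded isomorphism φ: A → B is completely isometric, i.e. ‖(φ(a_ij))‖ = ‖(a_ij)‖ for every d ∈ ℕ and every d×d matrix (a_ij) with entries in A. -/

import Mathlib

/-!
Characters of a uniform algebra `F ⊆ C(X)` are contractive. For a character `χ` and unit
vectors `ξ, η`, the coefficient `⟪η, χ(N) ξ⟫` is `χ` applied to `g = ∑ conj (η i) ξ j N i j ∈ F`,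
and `|g(x)| = |⟪η, N(x) ξ⟫| ≤ ‖N(x)‖`; hence characters are completely contractive. Composing with
point evaluations, every unital homomorphism between uniform algebras is completely contractive,
so every algebra isomorphism between them is completely isometric. Transporting through the
complete isometries `ψ₁`, `ψ₂` gives the claim for `φ`.
-/

/-- The norm of a `d × d` matrix of bounded operators on `H`, viewed as an operator
on the `ℓ²`-direct sum `H^d` (the C*-norm on `M_d(B(H))`). -/
noncomputable def matOpNorm {H : Type*} [NormedAddCommGroup H] [NormedSpace ℂ H]
    {d : ℕ} (M : Matrix (Fin d) (Fin d) (H →L[ℂ] H)) : ℝ :=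
  ‖((PiLp.continuousLinearEquiv 2 ℂ (fun _ : Fin d => H)).symm.toContinuousLinearMap.comp
      ((ContinuousLinearMap.pi fun i => ∑ j, (M i j).comp (ContinuousLinearMap.proj j)).comp
        (PiLp.continuousLinearEquiv 2 ℂ (fun _ : Fin d => H)).toContinuousLinearMap))‖

/-- `cod` is completely bounded relative to the matrix norms induced by `dom`. -/
def CompletelyBounded {ι H₂ H₃ : Type*}
    [NormedAddCommGroup H₂] [NormedSpace ℂ H₂] [NormedAddCommGroup H₃] [NormedSpace ℂ H₃]
    (dom : ι → (H₂ →L[ℂ] H₂)) (cod : ι → (H₃ →L[ℂ] H₃)) : Prop :=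
  ∃ C : ℝ, ∀ (d : ℕ) (M : Matrix (Fin d) (Fin d) ι),
    matOpNorm (fun i j => cod (M i j)) ≤ C * matOpNorm (fun i j => dom (M i j))

/-- The completely bounded norm of the map `dom i ↦ cod i`. -/
noncomputable def cbNormRel {ι H₂ H₃ : Type*}
    [NormedAddCommGroup H₂] [NormedSpace ℂ H₂] [NormedAddCommGroup H₃] [NormedSpace ℂ H₃]
    (dom : ι → (H₂ →L[ℂ] H₂)) (cod : ι → (H₃ →L[ℂ] H₃)) : ℝ :=
  sSup { r : ℝ | ∃ (d : ℕ) (M : Matrix (Fin d) (Fin d) ι),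
    matOpNorm (fun i j => dom (M i j)) ≤ 1 ∧ r = matOpNorm (fun i j => cod (M i j)) }

/-- The C*-norm of a matrix over `C(X, ℂ)`. -/
noncomputable def cMatNorm {X : Type*} [TopologicalSpace X] {d : ℕ}
    (M : Matrix (Fin d) (Fin d) C(X, ℂ)) : ℝ :=
  ⨆ x : X, ‖Matrix.toEuclideanCLM (𝕜 := ℂ) (Matrix.of fun i j => M i j x)‖

/-- A uniform algebra: a closed unital subalgebra of `C(X)` for a compact Hausdorff space `X`. -/
structure UniformAlgebraPkg : Type (u + 1) where
  carrier : Type u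
  [tops : TopologicalSpace carrier]
  [comp : CompactSpace carrier]
  [t2 : T2Space carrier]
  F : Subalgebra ℂ C(carrier, ℂ)
  closed : IsClosed (F : Set C(carrier, ℂ))

attribute [instance] UniformAlgebraPkg.tops UniformAlgebraPkg.comp UniformAlgebraPkg.t2

open scoped ComplexConjugate InnerProductSpace

lemma Matrix.inner_toEuclideanCLM_eq_sum {𝕜 n : Type*} [RCLike 𝕜] [Fintype n] [DecidableEq n]
    (A : Matrix n n 𝕜) (η ξ : EuclideanSpace 𝕜 n) :
    ⟪η, Matrix.toEuclideanCLM (𝕜 := 𝕜) A ξ⟫_𝕜 = ∑ i, ∑ j, (conj (η i) * ξ j) * A i j := by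
  simp only [PiLp.inner_apply, RCLike.inner_apply, Matrix.ofLp_toEuclideanCLM, Matrix.mulVec,
    dotProduct, Finset.sum_mul]
  exact Finset.sum_congr rfl fun i _ => Finset.sum_congr rfl fun j _ => by ring

section UniformAlgebra

variable {X : Type*} [TopologicalSpace X]

lemma cMatNorm_nonneg {d : ℕ} (M : Matrix (Fin d) (Fin d) C(X, ℂ)) : 0 ≤ cMatNorm M :=
  Real.iSup_nonneg fun _ => norm_nonneg _

variable [CompactSpace X]

lemma norm_toEuclideanCLM_apply_le_cMatNorm {d : ℕ} (M : Matrix (Fin d) (Fin d) C(X, ℂ))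
    (x : X) : ‖Matrix.toEuclideanCLM (𝕜 := ℂ) (Matrix.of fun i j => M i j x)‖ ≤ cMatNorm M := by
  have hcont : Continuous fun x : X =>
      ‖Matrix.toEuclideanCLM (𝕜 := ℂ) (Matrix.of fun i j => M i j x)‖ :=
    continuous_norm.comp <| LinearMap.continuous_of_finiteDimensional
      (Matrix.toEuclideanCLM (n := Fin d) (𝕜 := ℂ)).toAlgEquiv.toLinearMap |>.comp
        (continuous_pi fun i => continuous_pi fun j => (M i j).continuous)
  exact le_ciSup (isCompact_range hcont).bddAbove x

variable {F : Subalgebra ℂ C(X, ℂ)}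

lemma norm_character_apply_le (hF : IsClosed (F : Set C(X, ℂ))) (χ : F →ₐ[ℂ] ℂ) (g : F) :
    ‖χ g‖ ≤ ‖g‖ := by
  have : CompleteSpace F := hF.completeSpace_coe
  have h_one : ‖(1 : F)‖ ≤ 1 := (ContinuousMap.norm_le _ zero_le_one).mpr fun x => by simp
  exact (AlgHom.norm_apply_le_self_mul_norm_one χ g).trans
    (mul_le_of_le_one_right (norm_nonneg g) h_one)

theorem norm_toEuclideanCLM_map_le_cMatNorm (hF : IsClosed (F : Set C(X, ℂ)))
    (χ : F →ₐ[ℂ] ℂ) {d : ℕ} (N : Matrix (Fin d) (Fin d) F) :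
    ‖Matrix.toEuclideanCLM (𝕜 := ℂ) (Matrix.of fun i j => χ (N i j))‖ ≤
      cMatNorm (fun i j => (N i j : C(X, ℂ))) := by
  set S := Matrix.toEuclideanCLM (𝕜 := ℂ) (Matrix.of fun i j => χ (N i j))
  refine ContinuousLinearMap.opNorm_le_of_re_inner_le (cMatNorm_nonneg _) fun ξ η hξ hη => ?_
  set g : F := ∑ i, ∑ j, (conj (η i) * ξ j) • N i j
  have hχg : χ g = ⟪η, S ξ⟫_ℂ := by
    simp only [g, S, map_sum, AlgHom.map_smul_of_tower, smul_eq_mul, Matrix.of_apply,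
      Matrix.inner_toEuclideanCLM_eq_sum]
  have hg : ‖g‖ ≤ cMatNorm (fun i j => (N i j : C(X, ℂ))) := by
    refine (ContinuousMap.norm_le _ (cMatNorm_nonneg _)).mpr fun x => ?_
    set T := Matrix.toEuclideanCLM (𝕜 := ℂ) (Matrix.of fun i j => (N i j : C(X, ℂ)) x)
    have hgx : (g : C(X, ℂ)) x = ⟪η, T ξ⟫_ℂ := by
      simp [g, T, Matrix.inner_toEuclideanCLM_eq_sum]
    calc ‖(g : C(X, ℂ)) x‖ = ‖⟪η, T ξ⟫_ℂ‖ := by rw [hgx]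
      _ ≤ ‖η‖ * (‖T‖ * ‖ξ‖) := (norm_inner_le_norm _ _).trans
          (mul_le_mul_of_nonneg_left (T.le_opNorm ξ) (norm_nonneg _))
      _ = ‖T‖ := by rw [hη, hξ, one_mul, mul_one]
      _ ≤ _ := norm_toEuclideanCLM_apply_le_cMatNorm _ x
  calc RCLike.re ⟪S ξ, η⟫_ℂ ≤ ‖⟪S ξ, η⟫_ℂ‖ := RCLike.re_le_norm _
    _ = ‖χ g‖ := by rw [hχg, norm_inner_symm]
    _ ≤ ‖g‖ := norm_character_apply_le hF χ g
    _ ≤ _ := hg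

theorem cMatNorm_map_le {Y : Type*} [TopologicalSpace Y] (hF : IsClosed (F : Set C(X, ℂ)))
    (θ : F →ₐ[ℂ] C(Y, ℂ)) {d : ℕ} (N : Matrix (Fin d) (Fin d) F) :
    cMatNorm (fun i j => θ (N i j)) ≤ cMatNorm (fun i j => (N i j : C(X, ℂ))) :=
  Real.iSup_le (fun y => norm_toEuclideanCLM_map_le_cMatNorm hF
    ((ContinuousMap.evalAlgHom ℂ ℂ y).comp θ) N) (cMatNorm_nonneg _)

theorem cMatNorm_map_algEquiv {Y : Type*} [TopologicalSpace Y] [CompactSpace Y]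
    {G : Subalgebra ℂ C(Y, ℂ)} (hF : IsClosed (F : Set C(X, ℂ))) (hG : IsClosed (G : Set C(Y, ℂ)))
    (θ : F ≃ₐ[ℂ] G) {d : ℕ} (N : Matrix (Fin d) (Fin d) F) :
    cMatNorm (fun i j => (θ (N i j) : C(Y, ℂ))) = cMatNorm (fun i j => (N i j : C(X, ℂ))) := by
  refine le_antisymm (cMatNorm_map_le hF (G.val.comp θ.toAlgHom) N) ?_
  simpa using cMatNorm_map_le hG (F.val.comp θ.symm.toAlgHom) (fun i j => θ (N i j))

end UniformAlgebra

theorem stmt8_general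
    {H₁ H₂ : Type*}
    [NormedAddCommGroup H₁] [InnerProductSpace ℂ H₁]
    [NormedAddCommGroup H₂] [InnerProductSpace ℂ H₂]
    (A : Subalgebra ℂ (H₁ →L[ℂ] H₁)) (B : Subalgebra ℂ (H₂ →L[ℂ] H₂))
    (U₁ : UniformAlgebraPkg.{u}) (ψ₁ : U₁.F ≃ₐ[ℂ] A)
    (hψ₁ : ∀ (d : ℕ) (M : Matrix (Fin d) (Fin d) U₁.F),
      matOpNorm (fun i j => (ψ₁ (M i j) : H₁ →L[ℂ] H₁)) =
        cMatNorm (fun i j => (M i j : C(U₁.carrier, ℂ))))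
    (U₂ : UniformAlgebraPkg.{v}) (ψ₂ : U₂.F ≃ₐ[ℂ] B)
    (hψ₂ : ∀ (d : ℕ) (M : Matrix (Fin d) (Fin d) U₂.F),
      matOpNorm (fun i j => (ψ₂ (M i j) : H₂ →L[ℂ] H₂)) =
        cMatNorm (fun i j => (M i j : C(U₂.carrier, ℂ))))
    (φ : A ≃ₐ[ℂ] B) :
    ∀ (d : ℕ) (M : Matrix (Fin d) (Fin d) A),
      matOpNorm (fun i j => (φ (M i j) : H₂ →L[ℂ] H₂)) =
        matOpNorm (fun i j => (M i j : H₁ →L[ℂ] H₁)) := by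
  intro d M
  have hA := hψ₁ d (fun i j => ψ₁.symm (M i j))
  have hB := hψ₂ d (fun i j => ψ₂.symm (φ (M i j)))
  have hU := cMatNorm_map_algEquiv U₁.closed U₂.closed (ψ₁.trans (φ.trans ψ₂.symm))
    (fun i j => ψ₁.symm (M i j))
  simp only [AlgEquiv.apply_symm_apply, AlgEquiv.trans_apply] at hA hB hU
  rw [hA, hB, hU]

/-- If `A ⊆ B(H₁)` and `B ⊆ B(H₂)` are unital operator algebras which are completely
isometrically isomorphic to uniform algebras, then every unital completely bounded
isomorphism `φ : A → B` is completely isometric. -/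
theorem stmt8
    {H₁ H₂ : Type*}
    [NormedAddCommGroup H₁] [InnerProductSpace ℂ H₁] [CompleteSpace H₁]
    [NormedAddCommGroup H₂] [InnerProductSpace ℂ H₂] [CompleteSpace H₂]
    (A : Subalgebra ℂ (H₁ →L[ℂ] H₁)) (B : Subalgebra ℂ (H₂ →L[ℂ] H₂))
    (U₁ : UniformAlgebraPkg.{u}) (ψ₁ : U₁.F ≃ₐ[ℂ] A)
    (hψ₁ : ∀ (d : ℕ) (M : Matrix (Fin d) (Fin d) U₁.F),
      matOpNorm (fun i j => (ψ₁ (M i j) : H₁ →L[ℂ] H₁)) =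
        cMatNorm (fun i j => (M i j : C(U₁.carrier, ℂ))))
    (U₂ : UniformAlgebraPkg.{v}) (ψ₂ : U₂.F ≃ₐ[ℂ] B)
    (hψ₂ : ∀ (d : ℕ) (M : Matrix (Fin d) (Fin d) U₂.F),
      matOpNorm (fun i j => (ψ₂ (M i j) : H₂ →L[ℂ] H₂)) =
        cMatNorm (fun i j => (M i j : C(U₂.carrier, ℂ))))
    (φ : A ≃ₐ[ℂ] B)
    (hφ : CompletelyBounded (fun a : A => (a : H₁ →L[ℂ] H₁))
      (fun a : A => (φ a : H₂ →L[ℂ] H₂)))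
    (hφinv : CompletelyBounded (fun b : B => (b : H₂ →L[ℂ] H₂))
      (fun b : B => (φ.symm b : H₁ →L[ℂ] H₁))) :
    ∀ (d : ℕ) (M : Matrix (Fin d) (Fin d) A),
      matOpNorm (fun i j => (φ (M i j) : H₂ →L[ℂ] H₂)) =
        matOpNorm (fun i j => (M i j : H₁ →L[ℂ] H₁)) :=
  stmt8_general A B U₁ ψ₁ hψ₁ U₂ ψ₂ hψ₂ φ
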